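/- arXiv:0707.4160 — 6 statements merged into one kernel-verified Lean document; each statement's English description precedes it below -/
import Mathlib

section
/- Let $V$ be a vertex algebra and $a \in V$ a strongly nilpotent element of degree two (every product of elements of $V$ under arbitrary $j$-products and parenthesizations containing $a$ at least twice vanishes). Then the ideal of $V$ generated by $a$ is abelian, i.e., all $j$-products of two of its elements vanish. -/
open scoped BigOperators

/-- A vertex algebra structure on a complex vector space `V`.
`P n a b` denotes the `n`-th product `a_{(n)} b`, `vac` is the vacuum `𝟙`,
and `D` is the infinitesimal translation operator `T`. -/
structure VertexAlgebra (V : Type*) [AddCommGroup V] [Module ℂ V] where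
  P : ℤ → V →ₗ[ℂ] V →ₗ[ℂ] V
  vac : V
  D : V →ₗ[ℂ] V
  field_ax : ∀ a b : V, ∃ N : ℕ, ∀ n : ℕ, N ≤ n → P n a b = 0
  vac_field : ∀ (n : ℤ) (a : V), P n vac a = if n = -1 then a else 0
  creation : ∀ a : V, P (-1) a vac = a
  creation_pos : ∀ (a : V) (n : ℤ), 0 ≤ n → P n a vac = 0
  D_vac : D vac = 0
  transl_inv : ∀ (n : ℤ) (a b : V), P n (D a) b = (-n : ℂ) • P (n - 1) a b
  D_deriv : ∀ (n : ℤ) (a b : V), D (P n a b) = P n (D a) b + P n a (D b)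
  skew : ∀ (n : ℤ) (a b : V),
    P n a b = ∑ᶠ j : ℕ, (((-1 : ℂ) ^ (n + j + 1)) / (j.factorial : ℂ)) • (D ^ j) (P (n + j) b a)
  borcherds : ∀ (m k : ℤ) (a b c : V),
    P m a (P k b c) - P k b (P m a c)
      = ∑ᶠ j : ℕ, ((Ring.choose m j : ℤ) : ℂ) • P (m + k - j) (P j a b) c

namespace VertexAlgebra

variable {V : Type*} [AddCommGroup V] [Module ℂ V] (W : VertexAlgebra V)

/-- An ideal of a vertex algebra: a `ℂ[T]`-submodule closed under all products with
arbitrary elements of `V`. -/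
def IsIdeal (I : Submodule ℂ V) : Prop :=
  (∀ x ∈ I, W.D x ∈ I) ∧ ∀ (a : V), ∀ b ∈ I, ∀ n : ℤ, W.P n a b ∈ I

/-- `A · B`: the span of all products `a_{(j)} b`, `a ∈ A`, `b ∈ B`, `j ∈ ℤ`. -/
def prodSpan (A B : Submodule ℂ V) : Submodule ℂ V :=
  Submodule.span ℂ {x | ∃ a ∈ A, ∃ b ∈ B, ∃ j : ℤ, x = W.P j a b}

/-- `[A, B]`: the span of all products `a_{(j)} b`, `a ∈ A`, `b ∈ B`, `j ≥ 0`. -/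
def posSpan (A B : Submodule ℂ V) : Submodule ℂ V :=
  Submodule.span ℂ {x | ∃ a ∈ A, ∃ b ∈ B, ∃ j : ℕ, x = W.P j a b}

/-- The sequence `I^1 = I`, `I^{n+1} = I^n · I^n` (indexed so that `nilSeq I n = I^{n+1}`). -/
def nilSeq (I : Submodule ℂ V) : ℕ → Submodule ℂ V
  | 0 => I
  | n + 1 => W.prodSpan (nilSeq I n) (nilSeq I n)

/-- A nil-ideal: an ideal whose sequence of iterated self-products vanishes. -/
def IsNilIdeal (I : Submodule ℂ V) : Prop :=
  W.IsIdeal I ∧ ∃ n : ℕ, W.nilSeq I n = ⊥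

/-- A vertex algebra is finite if it is a finitely generated `ℂ[T]`-module. -/
def IsFinite : Prop :=
  ∃ s : Finset V, ∀ v : V,
    v ∈ Submodule.span ℂ {x | ∃ g ∈ s, ∃ k : ℕ, x = (W.D ^ k) g}

/-- Abelian ideal. -/
def IsAbelianIdeal (I : Submodule ℂ V) : Prop :=
  W.IsIdeal I ∧ ∀ a ∈ I, ∀ b ∈ I, ∀ n : ℤ, W.P n a b = 0

end VertexAlgebra

namespace VertexAlgebra

variable {V : Type*} [AddCommGroup V] [Module ℂ V]

/-- `ProdWith W a x k` : `x` is the value of a product of elements of `V`, under arbitrary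
`j`-products and parenthesizations, containing (marked occurrences of) `a` at least `k` times. -/
inductive ProdWith (W : VertexAlgebra V) (a : V) : V → ℕ → Prop
  | marked : ProdWith W a a 1
  | unmarked (v : V) : ProdWith W a v 0
  | node {x y : V} {k l : ℕ} (n : ℤ) :
      ProdWith W a x k → ProdWith W a y l → ProdWith W a (W.P n x y) (k + l)

/-- `a` is strongly nilpotent of degree `d`: every product of elements of `V` containing `a`
at least `d` times vanishes. -/
def StronglyNilpotent (W : VertexAlgebra V) (a : V) (d : ℕ) : Prop :=
  ∀ (x : V) (k : ℕ), ProdWith W a x k → d ≤ k → x = 0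

end VertexAlgebra

/-!
The products containing `a` at least once span an ideal containing `a`: a left product or a
`T`-derivative of such a product is again one, since `T x = x_{(-2)} 𝟙`. So the ideal generated
by `a` lies in their span, and a product of two of them contains `a` at least twice, hence
vanishes.
-/

namespace VertexAlgebra

variable {V : Type*} [AddCommGroup V] [Module ℂ V] (W : VertexAlgebra V)

theorem D_eq_P_neg_two_vac (x : V) : W.D x = W.P (-2) x W.vac := by
  have h := W.creation (W.D x)
  rw [W.transl_inv] at h
  norm_num at h
  exact h.symm

def productsWith (a : V) : Set V :=
  {x | ∃ k, 1 ≤ k ∧ ProdWith W a x k}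

variable {W} {a : V}

theorem self_mem_productsWith : a ∈ W.productsWith a :=
  ⟨1, le_rfl, .marked⟩

theorem P_mem_productsWith (n : ℤ) (b : V) {x : V} (hx : x ∈ W.productsWith a) :
    W.P n b x ∈ W.productsWith a := by
  obtain ⟨k, hk, hkx⟩ := hx
  exact ⟨0 + k, by omega, .node n (.unmarked b) hkx⟩

theorem D_mem_productsWith {x : V} (hx : x ∈ W.productsWith a) :
    W.D x ∈ W.productsWith a := by
  obtain ⟨k, hk, hkx⟩ := hx
  rw [D_eq_P_neg_two_vac]
  exact ⟨k + 0, by omega, .node (-2) hkx (.unmarked W.vac)⟩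

variable (W a) in
theorem isIdeal_span_productsWith : W.IsIdeal (Submodule.span ℂ (W.productsWith a)) :=
  ⟨fun _ hx ↦ Submodule.mapsTo_span (fun _ ↦ D_mem_productsWith) hx,
    fun b _ hx n ↦ Submodule.mapsTo_span (fun _ ↦ P_mem_productsWith n b) hx⟩

theorem P_eq_zero_of_mem_span_productsWith (ha : W.StronglyNilpotent a 2) (n : ℤ) {x y : V}
    (hx : x ∈ Submodule.span ℂ (W.productsWith a))
    (hy : y ∈ Submodule.span ℂ (W.productsWith a)) :
    W.P n x y = 0 := by
  have hspan : Submodule.map₂ (W.P n) (Submodule.span ℂ (W.productsWith a))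
      (Submodule.span ℂ (W.productsWith a)) = ⊥ := by
    rw [Submodule.map₂_span_span, Submodule.span_eq_bot]
    rintro _ ⟨u, ⟨k, hk, hku⟩, v, ⟨l, hl, hlv⟩, rfl⟩
    exact ha _ (k + l) (.node n hku hlv) (by omega)
  simpa [hspan] using Submodule.apply_mem_map₂ (W.P n) hx hy

end VertexAlgebra

open VertexAlgebra in
/-- a strongly nilpotent element of degree two generates an abelian ideal. -/
theorem degree_two_generates_abelian_ideal {V : Type*} [AddCommGroup V] [Module ℂ V]
    (W : VertexAlgebra V) (a : V) (ha : W.StronglyNilpotent a 2) :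
    ∀ x ∈ sInf {I : Submodule ℂ V | W.IsIdeal I ∧ a ∈ I},
      ∀ y ∈ sInf {I : Submodule ℂ V | W.IsIdeal I ∧ a ∈ I},
        ∀ n : ℤ, W.P n x y = 0 := by
  intro x hx y hy n
  have hle :
      sInf {I : Submodule ℂ V | W.IsIdeal I ∧ a ∈ I} ≤ Submodule.span ℂ (W.productsWith a) :=
    sInf_le ⟨W.isIdeal_span_productsWith a, Submodule.subset_span self_mem_productsWith⟩
  exact P_eq_zero_of_mem_span_productsWith ha n (hle hx) (hle hy)
end

section
/- A vertex algebra $V$ possesses a non-zero strongly nilpotent element if and only if it contains a non-zero abelian ideal. -/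
open scoped BigOperators

/-! If `a ≠ 0` is strongly nilpotent, let `n` be the largest number of marked occurrences of `a` in a
non-zero product. The span of the products containing `a` exactly `n` times is an ideal (it is
stable under `T` because `T a = a_{(-2)} 𝟙` and `T` is a derivation of every product), and it is
abelian because the product of two of its generators contains `a` exactly `2n > n` times.
Conversely, by skew-symmetry an ideal is also a right ideal, so every product containing an
element `a` of an abelian ideal `I` lies in `I`; a product containing `a` twice is then a product of
two elements of `I`, hence zero, and `a` is strongly nilpotent of degree 2. -/

namespace VertexAlgebra

variable {V : Type*} [AddCommGroup V] [Module ℂ V] (W : VertexAlgebra V)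

theorem D_eq_P_vac (a : V) : W.D a = W.P (-2) a W.vac := by
  simpa [W.creation] using W.transl_inv (-1) a W.vac

def prodWithSpan (a : V) (k : ℕ) : Submodule ℂ V :=
  Submodule.span ℂ {x | ProdWith W a x k}

variable {W} {a : V}

namespace IsIdeal

variable {I : Submodule ℂ V}

theorem pow_D_mem (hI : W.IsIdeal I) (j : ℕ) {x : V} (hx : x ∈ I) : (W.D ^ j) x ∈ I := by
  induction j with
  | zero => simpa using hx
  | succ j ih => simpa [pow_succ'] using hI.1 _ ih

theorem P_mem_of_left_mem (hI : W.IsIdeal I) {x : V} (hx : x ∈ I) (n : ℤ) (y : V) :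
    W.P n x y ∈ I := by
  rw [W.skew n x y]
  exact finsum_induction (· ∈ I) I.zero_mem (fun _ _ => I.add_mem)
    fun j => I.smul_mem _ (hI.pow_D_mem j (hI.2 y x hx (n + j)))

end IsIdeal

namespace ProdWith

theorem mem_of_pos {I : Submodule ℂ V} (hI : W.IsIdeal I) (ha : a ∈ I) {x : V} {k : ℕ}
    (hx : ProdWith W a x k) (hk : 0 < k) : x ∈ I := by
  induction hx with
  | marked => exact ha
  | unmarked v => omega
  | @node x y k l m _ _ ihx ihy =>
    rcases Nat.eq_zero_or_pos k with rfl | hk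
    · exact hI.2 x y (ihy (by omega)) m
    · exact hI.P_mem_of_left_mem (ihx hk) m y

end ProdWith

theorem StronglyNilpotent.two_of_mem_isAbelianIdeal {I : Submodule ℂ V}
    (hI : W.IsAbelianIdeal I) (ha : a ∈ I) : W.StronglyNilpotent a 2 := by
  intro x k hx hk
  induction hx with
  | marked | unmarked v => omega
  | @node x y k l m hx hy ihx ihy =>
    rcases Nat.eq_zero_or_pos k with rfl | hk
    · rw [ihy (by omega), map_zero]
    rcases Nat.eq_zero_or_pos l with rfl | hl
    · rw [ihx (by omega), map_zero, LinearMap.zero_apply]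
    exact hI.2 x (hx.mem_of_pos hI.1 ha hk) y (hy.mem_of_pos hI.1 ha hl) m

theorem P_mem_prodWithSpan {x y : V} {k l : ℕ} (hx : x ∈ W.prodWithSpan a k)
    (hy : y ∈ W.prodWithSpan a l) (m : ℤ) : W.P m x y ∈ W.prodWithSpan a (k + l) := by
  have hxy := Submodule.apply_mem_map₂ (W.P m) hx hy
  rw [prodWithSpan, prodWithSpan, Submodule.map₂_span_span] at hxy
  refine Submodule.span_le.2 ?_ hxy
  rintro _ ⟨x, hx, y, hy, rfl⟩
  exact Submodule.subset_span (ProdWith.node m hx hy)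

theorem D_mem_prodWithSpan {x : V} {k : ℕ} (hx : ProdWith W a x k) :
    W.D x ∈ W.prodWithSpan a k := by
  induction hx with
  | marked =>
    rw [D_eq_P_vac]
    exact Submodule.subset_span (ProdWith.node (-2) .marked (.unmarked W.vac))
  | unmarked v => exact Submodule.subset_span (.unmarked (W.D v))
  | @node x y k l m hx hy ihx ihy =>
    rw [W.D_deriv]
    exact Submodule.add_mem _ (P_mem_prodWithSpan ihx (Submodule.subset_span hy) m)
      (P_mem_prodWithSpan (Submodule.subset_span hx) ihy m)

theorem isIdeal_prodWithSpan (k : ℕ) : W.IsIdeal (W.prodWithSpan a k) := by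
  refine ⟨fun x hx => ?_, fun b x hx m => ?_⟩
  · refine Submodule.span_le (p := (W.prodWithSpan a k).comap W.D) |>.2 ?_ hx
    exact fun _ => D_mem_prodWithSpan
  · simpa using P_mem_prodWithSpan (Submodule.subset_span (.unmarked b)) hx m

theorem isAbelianIdeal_prodWithSpan {n : ℕ} (h : ∀ x, ProdWith W a x (n + n) → x = 0) :
    W.IsAbelianIdeal (W.prodWithSpan a n) := by
  refine ⟨isIdeal_prodWithSpan n, fun x hx y hy m => ?_⟩
  have hbot : W.prodWithSpan a (n + n) = ⊥ := Submodule.span_eq_bot.2 h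
  simpa [hbot] using P_mem_prodWithSpan hx hy m

theorem StronglyNilpotent.exists_max_nonzero_prodWith {d : ℕ} (hd : W.StronglyNilpotent a d) (ha : a ≠ 0) :
    ∃ n, 0 < n ∧ (∃ x ≠ 0, ProdWith W a x n) ∧ ∀ x k, ProdWith W a x k → n < k → x = 0 := by
  classical
  have hd₁ : 1 ≤ d := by
    by_contra h
    exact ha (hd a 1 .marked (by omega))
  let P k := ∃ x ≠ 0, ProdWith W a x k
  have h₁ : P 1 := ⟨a, ha, .marked⟩
  refine ⟨Nat.findGreatest P d, Nat.le_findGreatest hd₁ h₁, Nat.findGreatest_spec (P := P) hd₁ h₁,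
    fun x k hx hk => ?_⟩
  by_contra hx0
  by_cases hkd : k ≤ d
  · exact Nat.findGreatest_is_greatest hk hkd ⟨x, hx0, hx⟩
  · exact hx0 (hd x k hx (by omega))

end VertexAlgebra

open VertexAlgebra in
/-- a vertex algebra has a non-zero strongly nilpotent element iff it has a
non-zero abelian ideal. -/
theorem strongly_nilpotent_iff_abelian_ideal {V : Type*} [AddCommGroup V] [Module ℂ V]
    (W : VertexAlgebra V) :
    (∃ a : V, a ≠ 0 ∧ ∃ d : ℕ, W.StronglyNilpotent a d) ↔
      (∃ I : Submodule ℂ V, W.IsAbelianIdeal I ∧ I ≠ ⊥) := by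
  constructor
  · rintro ⟨a, ha, d, hd⟩
    obtain ⟨n, hn, ⟨x, hx, hxn⟩, hmax⟩ := hd.exists_max_nonzero_prodWith ha
    refine ⟨W.prodWithSpan a n, isAbelianIdeal_prodWithSpan fun y hy => hmax y _ hy (by omega),
      fun hbot => hx ?_⟩
    exact (Submodule.mem_bot ℂ).1 (hbot ▸ Submodule.subset_span hxn)
  · rintro ⟨I, hI, hne⟩
    obtain ⟨a, ha, ha0⟩ := Submodule.exists_mem_ne_zero_of_ne_bot hne
    exact ⟨a, ha0, 2, StronglyNilpotent.two_of_mem_isAbelianIdeal hI ha⟩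
end

section
/- Let $C$ be a finitely generated torsion $\mathbb{C}[\partial]$-module on which $\partial$ acts invertibly. Then every central extension of the Virasoro conformal algebra by $C$ is trivial: if $[L_\lambda L] = (\partial + 2\lambda)L + p(\lambda)$ with $p(\lambda)\in C[\lambda]$ defines a Lie conformal algebra, then replacing $L$ by $L + \partial^{-1}p(0)$ yields the standard Virasoro bracket. -/
open scoped BigOperators

/-- A Lie conformal algebra over `ℂ`: a `ℂ[∂]`-module `R` with a `λ`-bracket
`[a λ b] = ∑ₙ (λ^n/n!) • br n a b`. -/
structure LieConformalAlgebra (R : Type*) [AddCommGroup R] [Module ℂ R] where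
  der : R →ₗ[ℂ] R
  br : ℕ → R →ₗ[ℂ] R →ₗ[ℂ] R
  locality : ∀ a b : R, ∃ N : ℕ, ∀ n : ℕ, N ≤ n → br n a b = 0
  sesqui_left : ∀ (n : ℕ) (a b : R),
    br n (der a) b = if n = 0 then 0 else (-(n : ℂ)) • br (n - 1) a b
  sesqui_right : ∀ (n : ℕ) (a b : R),
    br n a (der b) = der (br n a b) + if n = 0 then 0 else (n : ℂ) • br (n - 1) a b
  skew : ∀ (n : ℕ) (a b : R),
    br n a b = -∑ᶠ j : ℕ, (((-1 : ℂ) ^ (n + j)) / (j.factorial : ℂ)) • (der ^ j) (br (n + j) b a)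
  jacobi : ∀ (m n : ℕ) (a b c : R),
    br m a (br n b c) - br n b (br m a c)
      = ∑ j ∈ Finset.range (m + 1), (m.choose j : ℂ) • br (m + n - j) (br j a b) c

namespace LieConformalAlgebra

variable {R : Type*} [AddCommGroup R] [Module ℂ R] (L : LieConformalAlgebra R)

/-- A torsion element of the underlying `ℂ[∂]`-module. -/
def IsTorsion (x : R) : Prop :=
  ∃ p : Polynomial ℂ, p ≠ 0 ∧ Polynomial.aeval L.der p x = 0

/-- `R` is a finitely generated `ℂ[∂]`-module. -/
def IsFinite : Prop :=
  ∃ s : Finset R, ∀ r : R,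
    r ∈ Submodule.span ℂ {x | ∃ g ∈ s, ∃ k : ℕ, x = (L.der ^ k) g}

/-- A `ℂ[∂]`-submodule `S` that is a finitely generated `ℂ[∂]`-module. -/
def IsFiniteSub (S : Submodule ℂ R) : Prop :=
  ∃ s : Finset R, (↑s : Set R) ⊆ (S : Set R) ∧ ∀ r ∈ S,
    r ∈ Submodule.span ℂ {x | ∃ g ∈ s, ∃ k : ℕ, x = (L.der ^ k) g}

/-- A subalgebra: a `ℂ[∂]`-submodule closed under the `λ`-bracket. -/
def IsSubalgebra (S : Submodule ℂ R) : Prop :=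
  (∀ x ∈ S, L.der x ∈ S) ∧ ∀ a ∈ S, ∀ b ∈ S, ∀ n : ℕ, L.br n a b ∈ S

end LieConformalAlgebra

/-
Shifting `L` by an element of `C` does not change its brackets, since `C` is central; so it
suffices to show `p n = 0` for `n ≥ 2` and `p 1 = 2 ∂⁻¹p(0)`. Since `∂` is injective on `C`, both
follow from the identity `∂[L_m L] = [L_0 [L_m L]]` for `m ≥ 1`, which is the Jacobi identity for
`(m, 0, L, L, L)`: on its right-hand side only the terms `j = 0, 1` survive, and they cancel the
term `m [L_{m-1} L]` produced by sesquilinearity on the left.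
-/

namespace LieConformalAlgebra

variable {R : Type*} [AddCommGroup R] [Module ℂ R] (L : LieConformalAlgebra R)

def IsCentral (C : Submodule ℂ R) : Prop :=
  ∀ c ∈ C, ∀ (r : R) (n : ℕ), L.br n c r = 0 ∧ L.br n r c = 0

variable {L}

theorem br_add_add_of_isCentral {C : Submodule ℂ R} (hcent : L.IsCentral C) {c : R} (hc : c ∈ C)
    (n : ℕ) (a b : R) : L.br n (a + c) (b + c) = L.br n a b := by
  simp only [map_add, LinearMap.add_apply, (hcent c hc _ n).1, (hcent c hc _ n).2, add_zero]

theorem br_br_zero_self {C : Submodule ℂ R} (hcent : L.IsCentral C) {a p₀ : R} (hp₀ : p₀ ∈ C)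
    (hbr0 : L.br 0 a a = L.der a + p₀) {m : ℕ} (hm : m ≠ 0) :
    L.br m a (L.br 0 a a) = L.der (L.br m a a) + (m : ℂ) • L.br (m - 1) a a := by
  rw [hbr0, map_add, (hcent p₀ hp₀ a m).2, add_zero, L.sesqui_right, if_neg hm]

theorem sum_br_br_self_self {C : Submodule ℂ R} (hcent : L.IsCentral C) {a : R} {p : ℕ → R}
    (hp : ∀ n, p n ∈ C) (hbr0 : L.br 0 a a = L.der a + p 0)
    (hbr1 : L.br 1 a a = (2 : ℂ) • a + p 1) (hbrn : ∀ n : ℕ, 2 ≤ n → L.br n a a = p n)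
    {m : ℕ} (hm : m ≠ 0) :
    ∑ j ∈ Finset.range (m + 1), (m.choose j : ℂ) • L.br (m + 0 - j) (L.br j a a) a
      = (m : ℂ) • L.br (m - 1) a a := by
  have hbr_p : ∀ j n, L.br n (p j) a = 0 := fun j n => (hcent (p j) (hp j) a n).1
  have hsupport : ∑ j ∈ Finset.range 2, (m.choose j : ℂ) • L.br (m + 0 - j) (L.br j a a) a
      = ∑ j ∈ Finset.range (m + 1), (m.choose j : ℂ) • L.br (m + 0 - j) (L.br j a a) a := by
    refine Finset.sum_subset (fun j hj => by simp only [Finset.mem_range] at hj ⊢; omega) ?_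
    intro j _ hj
    rw [hbrn j (by simp only [Finset.mem_range] at hj; omega), hbr_p, smul_zero]
  have hterm0 : L.br m (L.br 0 a a) a = (-(m : ℂ)) • L.br (m - 1) a a := by
    rw [hbr0, map_add, LinearMap.add_apply, hbr_p, add_zero, L.sesqui_left, if_neg hm]
  have hterm1 : L.br (m - 1) (L.br 1 a a) a = (2 : ℂ) • L.br (m - 1) a a := by
    rw [hbr1, map_add, map_smul, LinearMap.add_apply, LinearMap.smul_apply, hbr_p, add_zero]
  rw [← hsupport, Finset.sum_range_succ, Finset.sum_range_one, Nat.add_zero, Nat.sub_zero,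
    hterm0, hterm1, Nat.choose_zero_right, Nat.choose_one_right]
  module

theorem der_br_self_eq_br_zero {C : Submodule ℂ R} (hcent : L.IsCentral C) {a : R} {p : ℕ → R}
    (hp : ∀ n, p n ∈ C) (hbr0 : L.br 0 a a = L.der a + p 0)
    (hbr1 : L.br 1 a a = (2 : ℂ) • a + p 1) (hbrn : ∀ n : ℕ, 2 ≤ n → L.br n a a = p n)
    {m : ℕ} (hm : m ≠ 0) : L.der (L.br m a a) = L.br 0 a (L.br m a a) := by
  have jacobi := L.jacobi m 0 a a a
  rw [br_br_zero_self hcent (hp 0) hbr0 hm, sum_br_br_self_self hcent hp hbr0 hbr1 hbrn hm]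
    at jacobi
  linear_combination (norm := module) jacobi

end LieConformalAlgebra

open LieConformalAlgebra in
theorem virasoro_central_extension_trivial_general {R : Type*} [AddCommGroup R] [Module ℂ R]
    (L : LieConformalAlgebra R) (Lv : R) (C : Submodule ℂ R)
    -- `C` is `∂`-stable and `∂` acts invertibly on it
    (hsurj : ∀ c ∈ C, ∃ d ∈ C, L.der d = c)
    (hinj : ∀ c ∈ C, L.der c = 0 → c = 0)
    -- `C` is central
    (hcent : ∀ c ∈ C, ∀ (r : R) (n : ℕ), L.br n c r = 0 ∧ L.br n r c = 0)
    -- `[L λ L] = (∂ + 2λ)L + p(λ)` with `p(λ) ∈ C[λ]`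
    (p : ℕ → R) (hp : ∀ n, p n ∈ C)
    (hbr0 : L.br 0 Lv Lv = L.der Lv + p 0)
    (hbr1 : L.br 1 Lv Lv = (2 : ℂ) • Lv + p 1)
    (hbrn : ∀ n : ℕ, 2 ≤ n → L.br n Lv Lv = p n) :
    ∃ c ∈ C, L.der c = p 0 ∧
      L.br 0 (Lv + c) (Lv + c) = L.der (Lv + c) ∧
      L.br 1 (Lv + c) (Lv + c) = (2 : ℂ) • (Lv + c) ∧
      ∀ n : ℕ, 2 ≤ n → L.br n (Lv + c) (Lv + c) = 0 := by
  obtain ⟨c, hc, hdc⟩ := hsurj (p 0) (hp 0)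
  have hder : ∀ m ≠ 0, L.der (L.br m Lv Lv) = L.br 0 Lv (L.br m Lv Lv) :=
    fun m hm => der_br_self_eq_br_zero hcent hp hbr0 hbr1 hbrn hm
  have hpn : ∀ n, 2 ≤ n → p n = 0 := fun n hn => hinj _ (hp n) <| by
    simpa [hbrn n hn, (hcent _ (hp n) Lv 0).2] using hder n (by omega)
  have hp1 : p 1 = (2 : ℂ) • c := by
    refine sub_eq_zero.mp <| hinj _ (C.sub_mem (hp 1) (C.smul_mem 2 hc)) ?_
    have h1 := hder 1 one_ne_zero
    rw [hbr1, map_add, map_smul, map_add, (hcent _ (hp 1) Lv 0).2, add_zero, map_smul, hbr0] at h1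
    rw [map_sub, map_smul, hdc]
    linear_combination (norm := module) h1
  refine ⟨c, hc, hdc, ?_, ?_, fun n hn => ?_⟩ <;> rw [br_add_add_of_isCentral hcent hc]
  · rw [hbr0, map_add, hdc]
  · rw [hbr1, hp1, smul_add]
  · rw [hbrn n hn, hpn n hn]

open LieConformalAlgebra in
/-- every central extension of the Virasoro conformal algebra by a finitely
generated torsion `ℂ[∂]`-module `C` on which `∂` acts invertibly is trivial: the generator
`L` can be corrected by `∂⁻¹p(0) ∈ C` so as to satisfy the standard Virasoro bracket. -/
theorem virasoro_central_extension_trivial {R : Type*} [AddCommGroup R] [Module ℂ R]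
    (L : LieConformalAlgebra R) (Lv : R) (C : Submodule ℂ R)
    -- `C` is `∂`-stable and `∂` acts invertibly on it
    (hDC : ∀ c ∈ C, L.der c ∈ C)
    (hsurj : ∀ c ∈ C, ∃ d ∈ C, L.der d = c)
    (hinj : ∀ c ∈ C, L.der c = 0 → c = 0)
    -- `C` is a finitely generated torsion `ℂ[∂]`-module
    (hfg : L.IsFiniteSub C)
    (htor : ∀ c ∈ C, ∃ p : Polynomial ℂ, p ≠ 0 ∧ Polynomial.aeval L.der p c = 0)
    -- `C` is central
    (hcent : ∀ c ∈ C, ∀ (r : R) (n : ℕ), L.br n c r = 0 ∧ L.br n r c = 0)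
    -- `R = ℂ[∂]L ⊕ C`
    (hspan : ∀ r : R, ∃ (f : Polynomial ℂ), ∃ c ∈ C, r = Polynomial.aeval L.der f Lv + c)
    (hfree : ∀ (f : Polynomial ℂ), ∀ c ∈ C, Polynomial.aeval L.der f Lv + c = 0 → f = 0 ∧ c = 0)
    -- `[L λ L] = (∂ + 2λ)L + p(λ)` with `p(λ) ∈ C[λ]`
    (p : ℕ → R) (hp : ∀ n, p n ∈ C)
    (hbr0 : L.br 0 Lv Lv = L.der Lv + p 0)
    (hbr1 : L.br 1 Lv Lv = (2 : ℂ) • Lv + p 1)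
    (hbrn : ∀ n : ℕ, 2 ≤ n → L.br n Lv Lv = p n) :
    ∃ c ∈ C, L.der c = p 0 ∧
      L.br 0 (Lv + c) (Lv + c) = L.der (Lv + c) ∧
      L.br 1 (Lv + c) (Lv + c) = (2 : ℂ) • (Lv + c) ∧
      ∀ n : ℕ, 2 ≤ n → L.br n (Lv + c) (Lv + c) = 0 :=
  virasoro_central_extension_trivial_general L Lv C hsurj hinj hcent p hp hbr0 hbr1 hbrn
end

section
/- Fix $N \geq 1$. All solutions $p(\partial,x) \in \mathbb{C}[\partial,x]/(\partial^{N+1})$ of the cocycle equation $(\lambda-\mu)p(\partial,\lambda+\mu) = (\partial+\lambda+2\mu)p(\partial,\lambda) - (\partial+2\lambda+\mu)p(\partial,\mu) \bmod \partial^{N+1}$ are of the form $p(\partial,\lambda) = (\partial+2\lambda)q(\partial) + c\lambda^3\partial^N \bmod \partial^{N+1}$ for some $q(\partial) \in \mathbb{C}[\partial]$ and $c \in \mathbb{C}$. -/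
/-!
Putting `μ = 0` in the cocycle equation gives `∂ p(∂, λ) ≡ (∂ + 2λ) p(∂, 0)`, and then `∂ = 0`
shows that `p(∂, 0)` has no constant term; hence `p = (∂ + 2λ) q(∂) + ∂ᴺ t(∂, λ)`. Coboundaries
`(∂ + 2λ) q(∂)` solve the equation exactly, so `r(λ) = t(0, λ)` solves the `∂`-free equation
`(λ - μ) r(λ + μ) = (λ + 2μ) r(λ) - (2λ + μ) r(μ)`. Its `μ`-derivative at `μ = 0` is the Euler
equation `λ r' - 3 r + r(0) + 2 r'(0) λ = 0`, whose polynomial solutions are `aλ + cλ³`; the term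
`aλ∂ᴺ` is the coboundary of `(a / 2) ∂ᴺ` modulo `∂ᴺ⁺¹`.
-/

open MvPolynomial

namespace MvPolynomial

theorem algHom_aeval_vecCons₂ {R S T : Type*} [CommSemiring R] [CommSemiring S]
    [CommSemiring T] [Algebra R S] [Algebra R T] (φ : S →ₐ[R] T) (a b : S)
    (p : MvPolynomial (Fin 2) R) : φ (aeval ![a, b] p) = aeval ![φ a, φ b] p := by
  rw [comp_aeval_apply]
  congr
  funext i
  fin_cases i <;> rfl

theorem sub_aeval_mem_of_X_sub_mem {R σ : Type*} [CommRing R] {I : Ideal (MvPolynomial σ R)}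
    {f : σ → MvPolynomial σ R} (hf : ∀ i, X i - f i ∈ I) (p : MvPolynomial σ R) :
    p - aeval f p ∈ I := by
  have hcomp : (Ideal.Quotient.mkₐ R I).comp (aeval f) = Ideal.Quotient.mkₐ R I := by
    ext i
    simp only [AlgHom.comp_apply, aeval_X, Ideal.Quotient.mkₐ_eq_mk, Ideal.Quotient.eq]
    rw [← I.neg_mem_iff, neg_sub]
    exact hf i
  rw [← Ideal.Quotient.eq, ← Ideal.Quotient.mkₐ_eq_mk R]
  exact (AlgHom.congr_fun hcomp p).symm

end MvPolynomial

section CommRing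

variable {R : Type*} [CommRing R]

/-- `(λ - μ) p(∂, λ + μ) - ((∂ + λ + 2μ) p(∂, λ) - (∂ + 2λ + μ) p(∂, μ))`, where `∂, λ, μ` are
`X 0, X 1, X 2` and `p(∂, x)` has variables `X 0, X 1`. -/
noncomputable def cocycleDefect (p : MvPolynomial (Fin 2) R) : MvPolynomial (Fin 3) R :=
  (X 1 - X 2) * aeval ![X 0, X 1 + X 2] p
    - ((X 0 + X 1 + 2 * X 2) * aeval ![X 0, X 1] p - (X 0 + 2 * X 1 + X 2) * aeval ![X 0, X 2] p)

/-- `(λ - μ) r(λ + μ) - ((λ + 2μ) r(λ) - (2λ + μ) r(μ))`, where `λ, μ` are `X 0, X 1`: the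
defect of a `∂`-free `r` at `∂ = 0`. -/
noncomputable def cocycleDefectAtZero (r : Polynomial R) : MvPolynomial (Fin 2) R :=
  (X 0 - X 1) * Polynomial.aeval (X 0 + X 1) r
    - ((X 0 + 2 * X 1) * Polynomial.aeval (X 0) r - (2 * X 0 + X 1) * Polynomial.aeval (X 1) r)

theorem aeval_cocycleDefect {S : Type*} [CommRing S] [Algebra R S] (f : Fin 3 → S)
    (p : MvPolynomial (Fin 2) R) :
    aeval f (cocycleDefect p) = (f 1 - f 2) * aeval ![f 0, f 1 + f 2] p
      - ((f 0 + f 1 + 2 * f 2) * aeval ![f 0, f 1] p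
        - (f 0 + 2 * f 1 + f 2) * aeval ![f 0, f 2] p) := by
  simp only [cocycleDefect, map_sub, map_mul, map_add, algHom_aeval_vecCons₂, aeval_X, map_ofNat]

theorem aeval_zero_cocycleDefect (t : MvPolynomial (Fin 2) R) :
    aeval ![(0 : MvPolynomial (Fin 2) R), X 0, X 1] (cocycleDefect t)
      = cocycleDefectAtZero (aeval ![(0 : Polynomial R), Polynomial.X] t) := by
  rw [aeval_cocycleDefect]
  simp [cocycleDefectAtZero, algHom_aeval_vecCons₂]

theorem cocycleDefect_add (p p' : MvPolynomial (Fin 2) R) :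
    cocycleDefect (p + p') = cocycleDefect p + cocycleDefect p' := by
  simp only [cocycleDefect, map_add]
  ring

theorem cocycleDefect_X_zero_pow_mul (n : ℕ) (t : MvPolynomial (Fin 2) R) :
    cocycleDefect (X 0 ^ n * t) = X 0 ^ n * cocycleDefect t := by
  simp [cocycleDefect]
  ring

theorem cocycleDefect_coboundary (q : Polynomial R) :
    cocycleDefect ((X 0 + 2 * X 1) * Polynomial.aeval (X 0 : MvPolynomial (Fin 2) R) q) = 0 := by
  simp only [cocycleDefect, map_mul, map_add, map_ofNat, aeval_X, ← Polynomial.aeval_algHom_apply,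
    Matrix.cons_val_zero, Matrix.cons_val_one]
  ring

/-- Differentiate in `μ` and put `μ = 0`. -/
theorem ode_of_cocycleDefectAtZero_eq_zero {r : Polynomial R} (hr : cocycleDefectAtZero r = 0) :
    Polynomial.X * Polynomial.derivative r - 3 * r + Polynomial.C (r.coeff 0)
      + 2 * Polynomial.C (r.coeff 1) * Polynomial.X = 0 := by
  have hD := congrArg (fun f => aeval ![(Polynomial.X : Polynomial R), 0] (pderiv 1 f)) hr
  have h_two : pderiv 1 (2 : MvPolynomial (Fin 2) R) = 0 := by
    rw [← map_ofNat C 2, pderiv_C]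
  simp [cocycleDefectAtZero, Derivation.leibniz, Derivation.map_aeval, h_two,
    ← Polynomial.aeval_algHom_apply, ← Polynomial.coeff_zero_eq_aeval_zero',
    Polynomial.coeff_derivative] at hD
  linear_combination hD

end CommRing

section Domain

variable {R : Type*} [CommRing R] [IsDomain R]

theorem cocycleDefectAtZero_eq_zero_of_dvd {N : ℕ} {t : MvPolynomial (Fin 2) R}
    (ht : X 0 ^ (N + 1) ∣ cocycleDefect (X 0 ^ N * t)) :
    cocycleDefectAtZero (aeval ![(0 : Polynomial R), Polynomial.X] t) = 0 := by
  rw [cocycleDefect_X_zero_pow_mul, pow_succ,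
    mul_dvd_mul_iff_left (pow_ne_zero _ (X_ne_zero 0))] at ht
  have := map_dvd (aeval ![(0 : MvPolynomial (Fin 2) R), X 0, X 1]) ht
  rwa [aeval_X, Matrix.cons_val_zero, zero_dvd_iff, aeval_zero_cocycleDefect] at this

variable [CharZero R]

theorem Polynomial.eq_C_mul_X_add_C_mul_X_pow_three_of_ode {r : Polynomial R}
    (h : X * derivative r - 3 * r + C (r.coeff 0) + 2 * C (r.coeff 1) * X = 0) :
    r = C (r.coeff 1) * X + C (r.coeff 3) * X ^ 3 := by
  ext n
  have key := congrArg (coeff · n) h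
  rcases n with _ | _ | _ | _ | n
  · simp [coeff_derivative] at key
    have : (2 : R) * r.coeff 0 = 0 := by linear_combination -key
    simpa using this
  · simp
  · simp [coeff_derivative, coeff_X_mul] at key
    have : r.coeff 2 = 0 := by linear_combination -key
    simpa using this
  · simp
  · simp [coeff_derivative, coeff_X_mul] at key
    have : ((n : R) + 1) * r.coeff (n + 4) = 0 := by linear_combination key
    simpa [Nat.cast_add_one_ne_zero] using this

theorem exists_eq_coboundary_add_X_zero_pow_mul {N : ℕ} {p : MvPolynomial (Fin 2) R}
    (hp : X 0 ^ (N + 1) ∣ cocycleDefect p) :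
    ∃ (q : Polynomial R) (t : MvPolynomial (Fin 2) R),
      p = (X 0 + 2 * X 1) * Polynomial.aeval (X 0) q + X 0 ^ N * t := by
  set Q : Polynomial R := aeval ![(Polynomial.X : Polynomial R), 0] p
  have hQ : aeval ![X 0, 0] p = Polynomial.aeval (X 0 : MvPolynomial (Fin 2) R) Q := by
    simp [Q, algHom_aeval_vecCons₂]
  have h_μ_zero : X 0 ^ (N + 1) ∣ (X 0 + 2 * X 1) * Polynomial.aeval (X 0) Q - X 0 * p := by
    have := map_dvd (aeval ![X 0, X 1, 0] : MvPolynomial (Fin 3) R →ₐ[R] MvPolynomial (Fin 2) R) hp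
    rw [map_pow, aeval_X, aeval_cocycleDefect] at this
    have hX : ![X 0, X 1] = (X : Fin 2 → MvPolynomial (Fin 2) R) := by
      ext1 i; fin_cases i <;> rfl
    simp only [Matrix.cons_val_zero, Matrix.cons_val_one, Matrix.cons_val_two, Matrix.head_cons,
      Matrix.tail_cons, add_zero, mul_zero, sub_zero, hX, aeval_X_left_apply, hQ] at this
    convert this using 1
    ring
  have hQ_coeff_zero : Q.coeff 0 = 0 := by
    have := map_dvd (aeval ![(0 : R), 1] : MvPolynomial (Fin 2) R →ₐ[R] R) h_μ_zero
    rw [map_pow, map_sub, map_mul, map_mul, ← Polynomial.aeval_algHom_apply] at this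
    simpa [← Polynomial.coeff_zero_eq_aeval_zero] using this
  obtain ⟨t, ht⟩ : X 0 ^ N ∣ (X 0 + 2 * X 1) * Polynomial.aeval (X 0) Q.divX - p := by
    rw [← mul_dvd_mul_iff_left (X_ne_zero 0), ← pow_succ']
    convert h_μ_zero using 1
    have hQ_X_mul : Polynomial.aeval (X 0 : MvPolynomial (Fin 2) R) Q
        = X 0 * Polynomial.aeval (X 0) Q.divX := by
      conv_lhs => rw [← Polynomial.X_mul_divX_add Q, hQ_coeff_zero]
      simp
    rw [hQ_X_mul]
    ring
  exact ⟨Q.divX, -t, by linear_combination -ht⟩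

end Domain

theorem virasoro_cocycle_classification_general (N : ℕ) (p : MvPolynomial (Fin 2) ℂ)
    (hp : (X 1 - X 2) * (aeval ![X 0, X 1 + X 2] p)
        - ((X 0 + X 1 + 2 * X 2) * (aeval ![X 0, X 1] p)
            - (X 0 + 2 * X 1 + X 2) * (aeval ![X 0, X 2] p))
      ∈ Ideal.span {(X 0 : MvPolynomial (Fin 3) ℂ) ^ (N + 1)}) :
    ∃ (q : Polynomial ℂ) (c : ℂ),
      p - ((X 0 + 2 * X 1) * (Polynomial.aeval (X 0 : MvPolynomial (Fin 2) ℂ) q)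
            + C c * X 1 ^ 3 * X 0 ^ N)
        ∈ Ideal.span {(X 0 : MvPolynomial (Fin 2) ℂ) ^ (N + 1)} := by
  replace hp : X 0 ^ (N + 1) ∣ cocycleDefect p := Ideal.mem_span_singleton.mp hp
  obtain ⟨q, t, rfl⟩ := exists_eq_coboundary_add_X_zero_pow_mul hp
  rw [cocycleDefect_add, cocycleDefect_coboundary, zero_add] at hp
  set r := aeval ![(0 : Polynomial ℂ), Polynomial.X] t with hr_def
  have hr : r = Polynomial.C (r.coeff 1) * Polynomial.X
      + Polynomial.C (r.coeff 3) * Polynomial.X ^ 3 :=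
    Polynomial.eq_C_mul_X_add_C_mul_X_pow_three_of_ode
      (ode_of_cocycleDefectAtZero_eq_zero (cocycleDefectAtZero_eq_zero_of_dvd hp))
  obtain ⟨u, hu⟩ : X 0 ∣ t - Polynomial.aeval (X 1 : MvPolynomial (Fin 2) ℂ) r := by
    rw [← Ideal.mem_span_singleton, hr_def, algHom_aeval_vecCons₂]
    refine sub_aeval_mem_of_X_sub_mem (fun i => ?_) t
    fin_cases i <;> simp
  rw [hr] at hu
  simp only [map_add, map_mul, map_pow, Polynomial.aeval_C, Polynomial.aeval_X, algebraMap_eq] at hu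
  have h_half : (C (r.coeff 1) : MvPolynomial (Fin 2) ℂ) = 2 * C (r.coeff 1 / 2) := by
    rw [← map_ofNat C 2, ← C_mul, mul_div_cancel₀ _ two_ne_zero]
  refine ⟨q + Polynomial.C (r.coeff 1 / 2) * Polynomial.X ^ N, r.coeff 3,
    Ideal.mem_span_singleton.mpr ⟨u - C (r.coeff 1 / 2), ?_⟩⟩
  simp only [map_add, map_mul, map_pow, Polynomial.aeval_C, Polynomial.aeval_X, algebraMap_eq]
  linear_combination X 0 ^ N * hu + X 1 * X 0 ^ N * h_half

/-- solutions of the Virasoro 2-cocycle equation modulo `∂^{N+1}` are exactly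
`(∂+2λ)q(∂) + cλ³∂^N` modulo `∂^{N+1}`. Here `p` is a polynomial in `∂` (variable `0`) and
`x` (variable `1`); the cocycle equation lives in `ℂ[∂,λ,μ]` (variables `0,1,2`). -/
theorem virasoro_cocycle_classification (N : ℕ) (hN : 1 ≤ N) (p : MvPolynomial (Fin 2) ℂ)
    (hp : (X 1 - X 2) * (aeval ![X 0, X 1 + X 2] p)
        - ((X 0 + X 1 + 2 * X 2) * (aeval ![X 0, X 1] p)
            - (X 0 + 2 * X 1 + X 2) * (aeval ![X 0, X 2] p))
      ∈ Ideal.span {(X 0 : MvPolynomial (Fin 3) ℂ) ^ (N + 1)}) :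
    ∃ (q : Polynomial ℂ) (c : ℂ),
      p - ((X 0 + 2 * X 1) * (Polynomial.aeval (X 0 : MvPolynomial (Fin 2) ℂ) q)
            + C c * X 1 ^ 3 * X 0 ^ N)
        ∈ Ideal.span {(X 0 : MvPolynomial (Fin 2) ℂ) ^ (N + 1)} :=
  virasoro_cocycle_classification_general N p hp
end

section
/- All polynomial solutions $\alpha(x) \in \mathbb{C}[x]$ of the functional equation $(\lambda-\mu)\alpha(\lambda+\mu) - (\lambda+2\mu)\alpha(\lambda) + (2\lambda+\mu)\alpha(\mu) = c_0(\lambda^3 - \mu^3)$ (an identity in $\mathbb{C}[\lambda,\mu]$) exist only when $c_0 = 0$, in which case they are exactly $\alpha(x) = a x + c x^3$ for $a, c \in \mathbb{C}$. -/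
/-!
Evaluating the identity at `(1, 0)` and `(2, 0)` gives `2α(0) = c₀` and `4α(0) = 8c₀`,
so `c₀ = 0`. Evaluating it at `(2y, y)` then gives `y (α(3y) - 4α(2y) + 5α(y)) = 0`, that is,
the polynomial identity `α(3x) - 4α(2x) + 5α(x) = 0`. It multiplies the coefficient of `xⁿ` by
`3ⁿ - 4·2ⁿ + 5`, which vanishes only for `n = 1, 3`, because `4·2ⁿ < 3ⁿ` from `n = 4` on.
-/

open MvPolynomial

theorem four_mul_two_pow_ne_three_pow_add_five {n : ℕ} (h1 : n ≠ 1) (h3 : n ≠ 3) :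
    4 * 2 ^ n ≠ 3 ^ n + 5 := by
  obtain h | h := lt_or_ge n 4
  · interval_cases n <;> simp_all
  · obtain ⟨k, rfl⟩ := Nat.exists_eq_add_of_le' h
    have : 2 ^ k ≤ 3 ^ k := Nat.pow_le_pow_left (by norm_num) k
    rw [pow_add, pow_add]
    omega

theorem three_pow_sub_four_mul_two_pow_add_five_ne_zero {R : Type*} [CommRing R] [CharZero R]
    {n : ℕ} (h1 : n ≠ 1) (h3 : n ≠ 3) : (3 : R) ^ n - 4 * 2 ^ n + 5 ≠ 0 := by
  intro h
  apply four_mul_two_pow_ne_three_pow_add_five h1 h3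
  exact_mod_cast (by linear_combination -h : (4 * 2 ^ n : R) = 3 ^ n + 5)

namespace Polynomial

theorem eq_C_mul_X_add_C_mul_X_pow_three_of_comp_eq_zero {R : Type*} [CommRing R]
    [NoZeroDivisors R] [CharZero R] {p : R[X]}
    (hp : p.comp (C 3 * X) - C 4 * p.comp (C 2 * X) + C 5 * p = 0) :
    p = C (p.coeff 1) * X + C (p.coeff 3) * X ^ 3 := by
  ext n
  rcases eq_or_ne n 1 with rfl | h1
  · simp
  rcases eq_or_ne n 3 with rfl | h3
  · simp
  have hn := congr_arg (coeff · n) hp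
  simp only [coeff_add, coeff_sub, coeff_C_mul, comp_C_mul_X_coeff, coeff_zero] at hn
  have hfactor : ((3 : R) ^ n - 4 * 2 ^ n + 5) * p.coeff n = 0 := by linear_combination hn
  rw [(mul_eq_zero.mp hfactor).resolve_left
    (three_pow_sub_four_mul_two_pow_add_five_ne_zero h1 h3)]
  simp [coeff_X, coeff_X_pow, h3, h1.symm]

end Polynomial

def CocycleEquation {R : Type*} [CommRing R] (c0 : R) (α : Polynomial R) : Prop :=
  ∀ x y : R, (x - y) * α.eval (x + y) - (x + 2 * y) * α.eval x + (2 * x + y) * α.eval y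
    = c0 * (x ^ 3 - y ^ 3)

namespace CocycleEquation

variable {R : Type*} [CommRing R] {c0 : R} {α : Polynomial R}

theorem of_mvPolynomial
    (h : (X 0 - X 1) * Polynomial.aeval (X 0 + X 1 : MvPolynomial (Fin 2) R) α
        - (X 0 + 2 * X 1) * Polynomial.aeval (X 0 : MvPolynomial (Fin 2) R) α
        + (2 * X 0 + X 1) * Polynomial.aeval (X 1 : MvPolynomial (Fin 2) R) α
      = C c0 * (X 0 ^ 3 - X 1 ^ 3)) :
    CocycleEquation c0 α := by
  intro x y
  have := congr_arg (aeval ![x, y]) h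
  simp only [map_add, map_sub, map_mul, ← Polynomial.aeval_algHom_apply] at this
  simpa [Polynomial.coe_aeval_eq_eval] using this

theorem const_eq_zero [NoZeroDivisors R] [CharZero R] (h : CocycleEquation c0 α) : c0 = 0 := by
  have h10 := h 1 0
  have h20 := h 2 0
  norm_num at h10 h20
  have : (6 : R) * c0 = 0 := by linear_combination 2 * h10 - h20
  simpa using this

theorem comp_dilation_eq_zero [IsDomain R] [Infinite R] (h : CocycleEquation 0 α) :
    α.comp (Polynomial.C 3 * Polynomial.X)
      - Polynomial.C 4 * α.comp (Polynomial.C 2 * Polynomial.X) + Polynomial.C 5 * α = 0 := by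
  refine (mul_eq_zero.mp ?_).resolve_left Polynomial.X_ne_zero
  refine Polynomial.funext fun y ↦ ?_
  have hy := h (2 * y) y
  rw [show 2 * y + y = 3 * y by ring] at hy
  simp only [Polynomial.eval_mul, Polynomial.eval_sub, Polynomial.eval_add, Polynomial.eval_comp,
    Polynomial.eval_C, Polynomial.eval_X, Polynomial.eval_zero]
  linear_combination hy

end CocycleEquation

/-- the polynomial identity
`(λ-μ)α(λ+μ) - (λ+2μ)α(λ) + (2λ+μ)α(μ) = c₀(λ³-μ³)` in `ℂ[λ,μ]` has solutions exactly
when `c₀ = 0`, in which case they are exactly `α(x) = ax + cx³`. -/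
theorem virasoro_cocycle_degree_computation (c0 : ℂ) (α : Polynomial ℂ) :
    ((X 0 - X 1) * (Polynomial.aeval ((X 0 + X 1 : MvPolynomial (Fin 2) ℂ)) α)
        - (X 0 + 2 * X 1) * (Polynomial.aeval (X 0 : MvPolynomial (Fin 2) ℂ) α)
        + (2 * X 0 + X 1) * (Polynomial.aeval (X 1 : MvPolynomial (Fin 2) ℂ) α)
      = C c0 * ((X 0) ^ 3 - (X 1) ^ 3))
    ↔ (c0 = 0 ∧ ∃ a c : ℂ, α = Polynomial.C a * Polynomial.X + Polynomial.C c * Polynomial.X ^ 3) := by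
  constructor
  · intro h
    have hE := CocycleEquation.of_mvPolynomial h
    obtain rfl := hE.const_eq_zero
    exact ⟨rfl, _, _,
      Polynomial.eq_C_mul_X_add_C_mul_X_pow_three_of_comp_eq_zero hE.comp_dilation_eq_zero⟩
  · rintro ⟨rfl, a, c, rfl⟩
    simp only [map_add, map_mul, map_pow, Polynomial.aeval_X, Polynomial.aeval_C,
      MvPolynomial.algebraMap_eq, map_zero]
    ring
end

section
/- There is no vertex algebra $V$ with $V = \mathbb{C}[\partial]L + \mathbb{C}\mathbf{1}$, where $L$ is a non-torsion element of the $\mathbb{C}[\partial]$-module $V$ (with $\partial = T$) and $[L_\lambda L] = (\partial + 2\lambda)L + c\lambda^3\mathbf{1}$ for some $c \in \mathbb{C}$. -/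
open scoped BigOperators

/-!
Borcherds' identity turns `[L_λ L] = (∂ + 2λ)L + cλ³𝟙` into the commutator formula
`L_(m) L_(k) L - L_(k) L_(m) L = (m - k) L_(m+k-1) L + 6c·C(m,3)·δ_{m+k,2} L`.
For `m = 1` it makes `L_(-n) L` an eigenvector of `L_(1)` with eigenvalue `n + 3`; as `L_(1)`
acts on `∂^k L` by `k + 2` and kills `𝟙`, this forces `L_(-n) L = α_n ∂^(n+1) L`.
For `m = 2, 3` it gives linear relations between `α_0 = 1, α_1, α_2, α_3` and `c`: they force
`α_1 = 3/10`, `α_2 = 1/15`, `α_3 = 1/84`, `c = -11/30`, and then `96 α_3 - 3c = 6 α_1` fails.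
-/

open Polynomial

theorem Polynomial.coeff_X_mul_derivative_add_C_mul {R : Type*} [CommSemiring R] (f : R[X])
    (a : R) (k : ℕ) : (X * derivative f + C a * f).coeff k = (k + a) * f.coeff k := by
  rw [coeff_add, coeff_C_mul]
  cases k with
  | zero => simp
  | succ k => rw [coeff_X_mul, coeff_derivative]; push_cast; ring

theorem Polynomial.aeval_monomial_apply {R M : Type*} [CommSemiring R] [AddCommMonoid M]
    [Module R M] (T : Module.End R M) (k : ℕ) (a : R) (v : M) :
    aeval T (monomial k a) v = a • (T ^ k) v := by
  rw [aeval_monomial, Module.End.mul_apply, Module.algebraMap_end_apply]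

namespace VertexAlgebra

variable {V : Type*} [AddCommGroup V] [Module ℂ V] (W : VertexAlgebra V)

theorem D_pow_succ_apply (k : ℕ) (a : V) : (W.D ^ (k + 1)) a = W.D ((W.D ^ k) a) := by
  rw [pow_succ', Module.End.mul_apply]

theorem P_D_right (n : ℤ) (a b : V) :
    W.P n a (W.D b) = W.D (W.P n a b) + (n : ℂ) • W.P (n - 1) a b := by
  rw [W.D_deriv, W.transl_inv, neg_smul]
  abel

theorem P_neg_sub_one_vac (n : ℕ) (a : V) :
    W.P (-n - 1) a W.vac = ((n.factorial : ℂ)⁻¹) • (W.D ^ n) a := by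
  induction n generalizing a with
  | zero => simpa using W.creation a
  | succ n ih =>
    have h := W.transl_inv (-n - 1) a W.vac
    rw [ih, show (-n - 1 - 1 : ℤ) = -(n + 1 : ℕ) - 1 by push_cast; ring] at h
    rw [← Module.End.mul_apply, ← pow_succ,
      show (-((-n - 1 : ℤ) : ℂ)) = n + 1 by push_cast; ring] at h
    rw [Nat.factorial_succ, Nat.cast_mul, mul_inv, mul_smul, h, smul_smul,
      (Nat.cast_succ n : ((n + 1 : ℕ) : ℂ) = n + 1),
      inv_mul_cancel₀ (Nat.cast_add_one_ne_zero n), one_smul]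

theorem vac_ne_zero [Nontrivial V] : W.vac ≠ 0 := by
  intro h
  obtain ⟨a, ha⟩ := exists_ne (0 : V)
  exact ha (by rw [← W.creation a, h, map_zero])

theorem borcherds_eq_sum_range {a b : V} (N : ℕ) (h : ∀ j : ℕ, N ≤ j → W.P j a b = 0)
    (m k : ℤ) (d : V) :
    W.P m a (W.P k b d) - W.P k b (W.P m a d) = ∑ j ∈ Finset.range N,
      ((Ring.choose m j : ℤ) : ℂ) • W.P (m + k - j) (W.P j a b) d := by
  rw [W.borcherds]
  refine finsum_eq_sum_of_support_subset _ fun j hj => ?_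
  by_contra hjN
  simp_all

section Free

variable {W} {L : V} (hfree : ∀ f : ℂ[X], aeval W.D f L = 0 → f = 0)
include hfree

theorem eq_of_smul_D_pow_eq {k : ℕ} {a b : ℂ} (h : a • (W.D ^ k) L = b • (W.D ^ k) L) :
    a = b := by
  have := hfree (monomial k (a - b)) (by rw [aeval_monomial_apply, sub_smul, h, sub_self])
  rwa [monomial_eq_zero_iff, sub_eq_zero] at this

theorem eq_zero_of_aeval_add_smul_vac_eq_zero {f : ℂ[X]} {s : ℂ}
    (h : aeval W.D f L + s • W.vac = 0) : f = 0 ∧ s = 0 := by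
  have hXf : X * f = 0 := hfree _ (by simpa [W.D_vac, aeval_mul] using congrArg W.D h)
  obtain rfl : f = 0 := by simpa using hXf
  have : Nontrivial V := nontrivial_of_ne L 0 fun h0 => one_ne_zero (hfree 1 (by simp [h0]))
  exact ⟨rfl, (smul_eq_zero.mp (by simpa using h)).resolve_right W.vac_ne_zero⟩

end Free

/-- `[L_λ L] = (∂ + 2λ)L + cλ³𝟙`, read off coefficientwise (`λ³` carries `3! = 6`). -/
structure IsVirasoroVector (L : V) (c : ℂ) : Prop where
  P_zero : W.P 0 L L = W.D L
  P_one : W.P 1 L L = (2 : ℂ) • L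
  P_two : W.P 2 L L = 0
  P_three : W.P 3 L L = (6 * c) • W.vac
  P_eq_zero_of_four_le : ∀ n : ℕ, 4 ≤ n → W.P n L L = 0

namespace IsVirasoroVector

variable {W} {L : V} {c : ℂ} (hL : W.IsVirasoroVector L c)
include hL

theorem P_zero_D_pow (k : ℕ) : W.P 0 L ((W.D ^ k) L) = (W.D ^ (k + 1)) L := by
  induction k with
  | zero => simpa using hL.P_zero
  | succ k ih => rw [D_pow_succ_apply, P_D_right, ih, ← D_pow_succ_apply]; simp

theorem P_one_D_pow (k : ℕ) : W.P 1 L ((W.D ^ k) L) = ((k : ℂ) + 2) • (W.D ^ k) L := by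
  induction k with
  | zero => simpa using hL.P_one
  | succ k ih =>
    rw [D_pow_succ_apply, P_D_right, ih, map_smul, Int.cast_one, sub_self, hL.P_zero_D_pow,
      D_pow_succ_apply]
    push_cast
    module

theorem P_two_D_pow_succ (k : ℕ) :
    W.P 2 L ((W.D ^ (k + 1)) L) = (((k : ℂ) + 1) * (k + 4)) • (W.D ^ k) L := by
  induction k with
  | zero =>
    simp only [zero_add, pow_one, P_D_right, hL.P_two, map_zero, Int.cast_ofNat, Int.reduceSub,
      hL.P_one, CharP.cast_eq_zero, one_mul, pow_zero, Module.End.one_apply]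
    module
  | succ k ih =>
    rw [D_pow_succ_apply, P_D_right, ih, map_smul, ← D_pow_succ_apply,
      show ((2 : ℤ) - 1) = 1 by norm_num, hL.P_one_D_pow]
    push_cast
    module

theorem P_three_D_pow_succ_succ (k : ℕ) :
    W.P 3 L ((W.D ^ (k + 2)) L) = (((k : ℂ) + 1) * (k + 2) * (k + 6)) • (W.D ^ k) L := by
  have h1 : W.P 3 L (W.D L) = 0 := by simp [P_D_right, hL.P_three, hL.P_two, W.D_vac]
  induction k with
  | zero =>
    have h2 := hL.P_two_D_pow_succ 0
    rw [zero_add, pow_one] at h2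
    rw [zero_add, pow_two, Module.End.mul_apply, P_D_right, h1,
      show ((3 : ℤ) - 1) = 2 by norm_num, h2]
    simp only [map_zero, pow_zero, Module.End.one_apply]
    push_cast
    module
  | succ k ih =>
    rw [D_pow_succ_apply, P_D_right, ih, map_smul, ← D_pow_succ_apply,
      show ((3 : ℤ) - 1) = 2 by norm_num, hL.P_two_D_pow_succ]
    push_cast
    module

theorem P_P_sub_P_P (m k : ℤ) :
    W.P m L (W.P k L L) - W.P k L (W.P m L L)
      = ((m - k : ℤ) : ℂ) • W.P (m + k - 1) L L
        + if m + k = 2 then (6 * c * ((Ring.choose m 3 : ℤ) : ℂ)) • L else 0 := by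
  rw [W.borcherds_eq_sum_range 4 hL.P_eq_zero_of_four_le]
  simp only [Finset.sum_range_succ, Finset.range_one, Finset.sum_singleton,
    Ring.choose_zero_right', Ring.choose_one_right', pow_zero, pow_one, Int.cast_one,
    Nat.cast_one, Nat.cast_ofNat, CharP.cast_eq_zero, sub_zero, Int.cast_add, neg_add_rev,
    one_smul, map_smul, map_zero, LinearMap.smul_apply, LinearMap.zero_apply, smul_zero,
    add_zero, smul_ite, hL.P_zero, hL.P_one, hL.P_two, hL.P_three, W.transl_inv, W.vac_field]
  split_ifs <;> first | omega | module

theorem P_one_aeval (f : ℂ[X]) :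
    W.P 1 L (aeval W.D f L) = aeval W.D (X * derivative f + C 2 * f) L := by
  induction f using Polynomial.induction_on' with
  | add p q hp hq =>
    simp only [map_add, mul_add, LinearMap.add_apply, hp, hq]
    abel
  | monomial k a =>
    have : X * derivative (monomial k a) + C 2 * monomial k a = monomial k ((k + 2) * a) := by
      ext j
      rw [coeff_X_mul_derivative_add_C_mul, coeff_monomial, coeff_monomial]
      split_ifs <;> simp_all
    rw [this, aeval_monomial_apply, aeval_monomial_apply, map_smul, hL.P_one_D_pow, smul_smul,
      mul_comm]

section Free

variable (hfree : ∀ f : ℂ[X], aeval W.D f L = 0 → f = 0)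
include hfree

theorem exists_eq_smul_D_pow_of_P_one_eq
    (hspan : ∀ v : V, ∃ (f : ℂ[X]) (s : ℂ), v = aeval W.D f L + s • W.vac)
    (k : ℕ) {u : V} (hu : W.P 1 L u = ((k : ℂ) + 2) • u) :
    ∃ α : ℂ, u = α • (W.D ^ k) L := by
  obtain ⟨f, s, rfl⟩ := hspan u
  rw [map_add, map_smul, W.creation_pos L 1 zero_le_one, smul_zero, add_zero,
    hL.P_one_aeval] at hu
  have hzero : aeval W.D (X * derivative f + C 2 * f - C ((k : ℂ) + 2) * f) L
      + (-(((k : ℂ) + 2) * s)) • W.vac = 0 := by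
    rw [map_sub, LinearMap.sub_apply, hu]
    simp only [smul_add, map_mul, aeval_C, Module.End.mul_apply, Module.algebraMap_end_apply,
      neg_smul]
    module
  obtain ⟨hq, hs⟩ := eq_zero_of_aeval_add_smul_vac_eq_zero hfree hzero
  have hk : (k : ℂ) + 2 ≠ 0 := by exact_mod_cast Nat.succ_ne_zero (k + 1)
  obtain rfl : s = 0 := by simpa [hk] using hs
  have hf : f = monomial k (f.coeff k) := by
    ext j
    rw [coeff_monomial]
    split_ifs with hj
    · rw [hj]
    · have hcoeff := congrArg (coeff · j) hq
      simp only [coeff_sub, coeff_C_mul, coeff_X_mul_derivative_add_C_mul, coeff_zero] at hcoeff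
      have hjk : (j : ℂ) - k ≠ 0 := sub_ne_zero.mpr (by exact_mod_cast Ne.symm hj)
      exact (mul_eq_zero.mp (by linear_combination hcoeff)).resolve_left hjk
  refine ⟨f.coeff k, ?_⟩
  rw [hf, aeval_monomial_apply, zero_smul, add_zero, coeff_monomial_same]

theorem exists_P_neg_eq_smul
    (hspan : ∀ v : V, ∃ (f : ℂ[X]) (s : ℂ), v = aeval W.D f L + s • W.vac) (n : ℕ) :
    ∃ α : ℂ, W.P (-n) L L = α • (W.D ^ (n + 1)) L := by
  refine hL.exists_eq_smul_D_pow_of_P_one_eq hfree hspan (n + 1) ?_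
  have h := hL.P_P_sub_P_P 1 (-n)
  rw [hL.P_one, map_smul, if_neg (by omega), add_zero, show (1 : ℤ) + -n - 1 = -n by ring] at h
  push_cast at h ⊢
  linear_combination (norm := module) h

variable {n : ℕ} {α β : ℂ} (hβ : W.P (-n) L L = β • (W.D ^ (n + 1)) L)
include hβ

theorem P_neg_succ_coeff_eq (hα : W.P (-(n + 1 : ℕ)) L L = α • (W.D ^ (n + 1 + 1)) L) :
    α * ((n + 2) * (n + 5)) = (n + 3) * β := by
  have h := hL.P_P_sub_P_P 2 (-(n + 1 : ℕ))
  rw [hα, hL.P_two, map_zero, sub_zero, map_smul, hL.P_two_D_pow_succ, if_neg (by omega),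
    add_zero, show (2 : ℤ) + -(n + 1 : ℕ) - 1 = -n by push_cast; ring, hβ] at h
  refine eq_of_smul_D_pow_eq hfree (k := n + 1) ?_
  push_cast at h
  linear_combination (norm := module) h

theorem P_neg_add_two_coeff_eq (hα : W.P (-(n + 2 : ℕ)) L L = α • (W.D ^ (n + 2 + 1)) L) :
    α * ((n + 2) * (n + 3) * (n + 7)) - 6 * c / (n + 1).factorial = (n + 5) * β := by
  have h := hL.P_P_sub_P_P 3 (-(n + 2 : ℕ))
  rw [hα, hL.P_three, map_smul, map_smul,
    show (-(n + 2 : ℕ) : ℤ) = -(n + 1 : ℕ) - 1 by push_cast; ring, W.P_neg_sub_one_vac,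
    show n + 2 + 1 = (n + 1) + 2 by ring, hL.P_three_D_pow_succ_succ, if_neg (by omega),
    add_zero, show (3 : ℤ) + (-(n + 1 : ℕ) - 1) - 1 = -n by push_cast; ring, hβ] at h
  refine eq_of_smul_D_pow_eq hfree (k := n + 1) ?_
  push_cast at h
  rw [div_eq_mul_inv]
  linear_combination (norm := module) h

end Free

end IsVirasoroVector

end VertexAlgebra

open VertexAlgebra in
/-- there is no vertex algebra `V = ℂ[∂]L + ℂ𝟙` with `L` non-torsion and
`[L_λ L] = (∂+2λ)L + cλ³𝟙` (coefficientwise: `L_{(0)}L = ∂L`, `L_{(1)}L = 2L`,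
`L_{(2)}L = 0`, `L_{(3)}L = 6c·𝟙`, `L_{(n)}L = 0` for `n ≥ 4`). -/
theorem no_virasoro_vertex_algebra {V : Type*} [AddCommGroup V] [Module ℂ V]
    (W : VertexAlgebra V) (Lv : V) (c : ℂ)
    (hspan : ∀ v : V, ∃ (f : Polynomial ℂ) (s : ℂ),
      v = Polynomial.aeval W.D f Lv + s • W.vac)
    (hfree : ∀ f : Polynomial ℂ, Polynomial.aeval W.D f Lv = 0 → f = 0)
    (h0 : W.P 0 Lv Lv = W.D Lv)
    (h1 : W.P 1 Lv Lv = (2 : ℂ) • Lv)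
    (h2 : W.P 2 Lv Lv = 0)
    (h3 : W.P 3 Lv Lv = (6 * c) • W.vac)
    (hn : ∀ n : ℕ, 4 ≤ n → W.P n Lv Lv = 0) :
    False := by
  have hL : W.IsVirasoroVector Lv c := ⟨h0, h1, h2, h3, hn⟩
  have hα₀ : W.P (-(0 : ℕ)) Lv Lv = (1 : ℂ) • (W.D ^ (0 + 1)) Lv := by simpa using h0
  obtain ⟨α₁, hα₁⟩ := hL.exists_P_neg_eq_smul hfree hspan 1
  obtain ⟨α₂, hα₂⟩ := hL.exists_P_neg_eq_smul hfree hspan 2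
  obtain ⟨α₃, hα₃⟩ := hL.exists_P_neg_eq_smul hfree hspan 3
  have e₁ := hL.P_neg_succ_coeff_eq hfree hα₀ hα₁
  have e₂ := hL.P_neg_succ_coeff_eq hfree hα₁ hα₂
  have e₃ := hL.P_neg_succ_coeff_eq hfree hα₂ hα₃
  have e₄ := hL.P_neg_add_two_coeff_eq hfree hα₀ hα₂
  have e₅ := hL.P_neg_add_two_coeff_eq hfree hα₁ hα₃
  norm_num [Nat.factorial] at e₁ e₂ e₃ e₄ e₅
  have : (31 : ℂ) / 70 = 0 := by
    linear_combination
      (24 / 35 : ℂ) * e₁ + (3 / 14 : ℂ) * e₂ - (24 / 7 : ℂ) * e₃ - (1 / 2 : ℂ) * e₄ + e₅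
  norm_num at this
end
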